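/- arXiv:2404.19518 — 4 statements merged into one kernel-verified Lean document; each statement's English description precedes it below -/
import Mathlib

section
/- Let G=(V,E) be an undirected graph where agents move in discrete time steps by waiting or moving to an adjacent vertex, subject to a set of vertex constraints (forbidding occupation of a vertex at a given time step). Suppose (t0,s) and (t1,s) are two time-space states at the same vertex s with t0 ≤ t1, and vertex s is not forbidden by any constraint at any time step in the interval [t0,t1] (i.e., both states lie in the same safe interval). Then for any finite set of goal vertices Γ, the minimum completion time of a constraint-respecting path starting from (t0,s) that visits every vertex of Γ at least once is at most the minimum completion time of such a path starting from (t1,s). -/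
/-- A timed path on a graph: at each unit time step the agent waits or moves
to an adjacent vertex. -/
structure TPath {V : Type*} (G : SimpleGraph V) where
  start : ℕ
  len : ℕ
  pos : ℕ → V
  step : ∀ i, i < len → pos (i + 1) = pos i ∨ G.Adj (pos i) (pos (i + 1))

namespace TPath

variable {V : Type*} {G : SimpleGraph V}

/-- The path violates no vertex constraint `(t, v) ∈ C`. -/
def Respects (p : TPath G) (C : Set (ℕ × V)) : Prop :=
  ∀ i, i ≤ p.len → (p.start + i, p.pos i) ∉ C

/-- The path visits vertex `g` at least once. -/
def Visits (p : TPath G) (g : V) : Prop :=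
  ∃ i, i ≤ p.len ∧ p.pos i = g

/-- The completion time (last time step) of the path. -/
def completion (p : TPath G) : ℕ := p.start + p.len

end TPath

/-- Minimum completion time over constraint-respecting paths from `(t, s)`
visiting every goal of `Γ` at least once (`⊤` if none exists). -/
noncomputable def minCompletion {V : Type*} (G : SimpleGraph V) (C : Set (ℕ × V))
    (t : ℕ) (s : V) (Γ : Set V) : ℕ∞ :=
  sInf {n : ℕ∞ | ∃ p : TPath G, p.start = t ∧ p.pos 0 = s ∧ p.Respects C ∧
    (∀ g ∈ Γ, p.Visits g) ∧ (p.completion : ℕ∞) = n}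

/-- Within a safe interval, starting earlier never increases the minimum
completion time of a multi-goal path. -/
theorem statement0 {V : Type*} (G : SimpleGraph V) (C : Set (ℕ × V)) (s : V)
    (t0 t1 : ℕ) (h01 : t0 ≤ t1)
    (hsafe : ∀ t, t0 ≤ t → t ≤ t1 → (t, s) ∉ C)
    (Γ : Finset V) :
    minCompletion G C t0 s ↑Γ ≤ minCompletion G C t1 s ↑Γ := by
  apply le_sInf
  rintro n ⟨p, hstart, hpos0, hresp, hvis, hcomp⟩
  set d := t1 - t0 with hd
  have hdt : t0 + d = t1 := by omega
  refine sInf_le ⟨⟨t0, d + p.len, fun i => p.pos (i - d), ?_⟩, rfl, ?_, ?_, ?_, ?_⟩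
  · intro i hi
    by_cases h : i + 1 ≤ d
    · left
      show p.pos (i + 1 - d) = p.pos (i - d)
      have h1 : i + 1 - d = 0 := by omega
      have h2 : i - d = 0 := by omega
      rw [h1, h2]
    · have h1 : i + 1 - d = (i - d) + 1 := by omega
      show p.pos (i + 1 - d) = p.pos (i - d) ∨ G.Adj (p.pos (i - d)) (p.pos (i + 1 - d))
      rw [h1]
      exact p.step (i - d) (by omega)
  · simpa using hpos0
  · intro i hi
    replace hi : i ≤ d + p.len := hi
    show (t0 + i, p.pos (i - d)) ∉ C
    by_cases h : i ≤ d
    · have : i - d = 0 := by omega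
      rw [this, hpos0]
      exact hsafe (t0 + i) (by omega) (by omega)
    · have : t0 + i = p.start + (i - d) := by omega
      rw [this]
      exact hresp (i - d) (by omega)
  · intro g hg
    obtain ⟨i, hi, hpi⟩ := hvis g hg
    exact ⟨i + d, by show i + d ≤ d + p.len; omega, by simpa using hpi⟩
  · rw [← hcomp]
    congr 1
    simp only [TPath.completion, hstart]
    omega
end

section
/- Greedy earliest-arrival concatenation with respect to a goal-vertex visiting order is not optimal in general: there exists an undirected graph G=(V,E), a start vertex s, two goal vertices g1, g2, and a set of vertex/edge constraints, such that for every visiting order of the goal vertices, the path formed by concatenating (i) a shortest constraint-respecting path from the start at time 0 to the first goal and (ii) a shortest constraint-respecting path from that arrival state to the second goal has strictly greater completion time than the true minimum completion time over all constraint-respecting paths visiting both goals. -/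
/-- The path violates no vertex constraint in `CV` and no (directed) edge
constraint in `CE`. -/
def Respects2 {V : Type*} {G : SimpleGraph V} (p : TPath G)
    (CV : Set (ℕ × V)) (CE : Set (ℕ × V × V)) : Prop :=
  (∀ i, i ≤ p.len → (p.start + i, p.pos i) ∉ CV) ∧
  (∀ i, i < p.len → (p.start + i, p.pos i, p.pos (i + 1)) ∉ CE)

/-- Earliest arrival time at vertex `tgt` by a constraint-respecting path
starting from `(t, u)`. -/
noncomputable def earliestArrive2 {V : Type*} (G : SimpleGraph V)
    (CV : Set (ℕ × V)) (CE : Set (ℕ × V × V)) (t : ℕ) (u tgt : V) : ℕ∞ :=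
  sInf {n : ℕ∞ | ∃ p : TPath G, p.start = t ∧ p.pos 0 = u ∧ Respects2 p CV CE ∧
    p.pos p.len = tgt ∧ (p.completion : ℕ∞) = n}

/-- True minimum completion time over all constraint-respecting paths from
`(0, s)` visiting both goals. -/
noncomputable def opt2 {V : Type*} (G : SimpleGraph V)
    (CV : Set (ℕ × V)) (CE : Set (ℕ × V × V)) (s g1 g2 : V) : ℕ∞ :=
  sInf {n : ℕ∞ | ∃ p : TPath G, p.start = 0 ∧ p.pos 0 = s ∧ Respects2 p CV CE ∧
    p.Visits g1 ∧ p.Visits g2 ∧ (p.completion : ℕ∞) = n}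

/-!
For the goal order (g₁, g₂) the earliest arrival at g₁ is forced along the edge s g₁ at time 1,
and an edge constraint then makes every move (and the wait) out of g₁ at time 1 except the one back
to s illegal, so g₂ is reached only at time 4. For the order (g₂, g₁) the earliest arrival at g₂ is
at time 3, and g₁ follows at time 4. Yet the detour s → x → g₁ → g₂ visits both goals by time 3.

Earliest arrival times are computed exactly by forward reachability in the time-expanded graph.
-/

namespace TPath

variable {V : Type*} {G : SimpleGraph V}

def single (t : ℕ) (u : V) : TPath G := ⟨t, 0, fun _ => u, fun _ h => absurd h (Nat.not_lt_zero _)⟩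

def snoc (p : TPath G) (w : V) (h : w = p.pos p.len ∨ G.Adj (p.pos p.len) w) : TPath G where
  start := p.start
  len := p.len + 1
  pos i := if i ≤ p.len then p.pos i else w
  step i hi := by
    rcases Nat.lt_succ_iff_lt_or_eq.mp hi with hi | rfl
    · simpa [hi.le, Nat.succ_le_of_lt hi] using p.step i hi
    · simpa using h

theorem respects2_snoc {p : TPath G} {w : V} {h : w = p.pos p.len ∨ G.Adj (p.pos p.len) w}
    {CV : Set (ℕ × V)} {CE : Set (ℕ × V × V)} (hp : Respects2 p CV CE)
    (hE : (p.start + p.len, p.pos p.len, w) ∉ CE) (hV : (p.start + (p.len + 1), w) ∉ CV) :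
    Respects2 (p.snoc w h) CV CE := by
  constructor
  · intro i hi
    rcases Nat.of_le_succ hi with hi | rfl
    · simpa [snoc, hi] using hp.1 i hi
    · simpa [snoc] using hV
  · intro i hi
    rcases Nat.lt_succ_iff_lt_or_eq.mp hi with hi | rfl
    · simpa [snoc, hi.le, Nat.succ_le_of_lt hi] using hp.2 i hi
    · simpa [snoc] using hE

end TPath

section Reachability

variable {V : Type*} [Fintype V] [DecidableEq V] (G : SimpleGraph V) [DecidableRel G.Adj]
  (CV : Set (ℕ × V)) (CE : Set (ℕ × V × V)) [DecidablePred (· ∈ CV)] [DecidablePred (· ∈ CE)]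

/-- `reachableAt G CV CE t u k` is the set of vertices a constraint-respecting path started at
`(t, u)` can occupy at time `t + k`. -/
def reachableAt (t : ℕ) (u : V) : ℕ → Finset V
  | 0 => if (t, u) ∈ CV then ∅ else {u}
  | k + 1 => Finset.univ.filter fun w => ∃ v ∈ reachableAt t u k,
      (w = v ∨ G.Adj v w) ∧ (t + k, v, w) ∉ CE ∧ (t + (k + 1), w) ∉ CV

variable {G CV CE}

theorem TPath.pos_mem_reachableAt {p : TPath G} (hp : Respects2 p CV CE) :
    ∀ i ≤ p.len, p.pos i ∈ reachableAt G CV CE p.start (p.pos 0) i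
  | 0, _ => by
    rw [reachableAt, if_neg (by simpa using hp.1 0 (Nat.zero_le _))]
    exact Finset.mem_singleton_self _
  | i + 1, hi => by
    simp only [reachableAt, Finset.mem_filter, Finset.mem_univ, true_and]
    exact ⟨p.pos i, p.pos_mem_reachableAt hp i (by omega), p.step i hi, hp.2 i hi,
      hp.1 (i + 1) hi⟩

theorem exists_tPath_of_mem_reachableAt {t : ℕ} {u : V} :
    ∀ {k : ℕ} {w : V}, w ∈ reachableAt G CV CE t u k →
      ∃ p : TPath G, p.start = t ∧ p.pos 0 = u ∧ Respects2 p CV CE ∧ p.len = k ∧ p.pos k = w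
  | 0, w, hw => by
    by_cases hu : (t, u) ∈ CV
    · simp [reachableAt, hu] at hw
    · simp only [reachableAt, hu, if_false, Finset.mem_singleton] at hw
      subst hw
      refine ⟨.single t w, rfl, rfl, ⟨fun i hi => ?_, fun _ h => absurd h (Nat.not_lt_zero _)⟩,
        rfl, rfl⟩
      rw [Nat.le_zero.mp hi]
      simpa [TPath.single] using hu
  | k + 1, w, hw => by
    simp only [reachableAt, Finset.mem_filter, Finset.mem_univ, true_and] at hw
    obtain ⟨v, hv, hstep, hE, hV⟩ := hw
    obtain ⟨p, rfl, h0, hp, rfl, rfl⟩ := exists_tPath_of_mem_reachableAt hv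
    refine ⟨p.snoc w hstep, rfl, by simpa [TPath.snoc] using h0, TPath.respects2_snoc hp hE hV,
      rfl, by simp [TPath.snoc]⟩

theorem earliestArrive2_eq_of_mem_reachableAt {t : ℕ} {u tgt : V} {k : ℕ}
    (hk : tgt ∈ reachableAt G CV CE t u k)
    (hmin : ∀ j < k, tgt ∉ reachableAt G CV CE t u j) :
    earliestArrive2 G CV CE t u tgt = (t + k : ℕ) := by
  apply le_antisymm
  · obtain ⟨p, hs, h0, hp, hlen, hend⟩ := exists_tPath_of_mem_reachableAt hk
    exact sInf_le ⟨p, hs, h0, hp, hlen ▸ hend, by simp [TPath.completion, hs, hlen]⟩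
  · refine le_sInf ?_
    rintro _ ⟨p, rfl, rfl, hp, hend, rfl⟩
    have hlen : k ≤ p.len :=
      not_lt.mp fun hlt => hmin p.len hlt (hend ▸ p.pos_mem_reachableAt hp p.len le_rfl)
    exact_mod_cast Nat.add_le_add_left hlen _

end Reachability

namespace Counterexample

inductive Vtx
  | s | g1 | g2 | x
  deriving DecidableEq

open Vtx

instance : Fintype Vtx := ⟨{s, g1, g2, x}, fun v => by cases v <;> decide⟩

abbrev graph : SimpleGraph Vtx := SimpleGraph.fromEdgeSet {s(s, g1), s(s, x), s(x, g1), s(g1, g2)}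

abbrev edgeConstraints : Set (ℕ × Vtx × Vtx) := {(1, g1, g1), (1, g1, g2), (1, g1, x)}

def detour : TPath graph where
  start := 0
  len := 3
  pos i := [s, x, g1, g2].getD i g2
  step := by decide

theorem opt2_le_three : opt2 graph ∅ edgeConstraints s g1 g2 ≤ 3 :=
  sInf_le ⟨detour, rfl, rfl, by unfold Respects2; decide, ⟨2, by decide⟩, ⟨3, by decide⟩, rfl⟩

end Counterexample

open Counterexample Vtx in
/-- Greedy earliest-arrival concatenation w.r.t. a goal-vertex visiting order
is not optimal in general: there is an instance where, for every visiting
order of the two goals, the concatenated earliest-arrival path is strictly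
worse than the true optimum. -/
theorem statement2 :
    ∃ (V : Type) (G : SimpleGraph V) (s g1 g2 : V)
      (CV : Set (ℕ × V)) (CE : Set (ℕ × V × V)),
      ∀ a b : V, ((a = g1 ∧ b = g2) ∨ (a = g2 ∧ b = g1)) →
        ∃ t1 t2 : ℕ,
          (t1 : ℕ∞) = earliestArrive2 G CV CE 0 s a ∧
          (t2 : ℕ∞) = earliestArrive2 G CV CE t1 a b ∧
          opt2 G CV CE s g1 g2 < (t2 : ℕ∞) := by
  refine ⟨Vtx, graph, s, g1, g2, ∅, edgeConstraints, ?_⟩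
  have hopt : opt2 graph ∅ edgeConstraints s g1 g2 < (4 : ℕ) :=
    opt2_le_three.trans_lt (by norm_num)
  have arrival {t k : ℕ} {u tgt : Vtx} (hk : tgt ∈ reachableAt graph ∅ edgeConstraints t u k)
      (hmin : ∀ j < k, tgt ∉ reachableAt graph ∅ edgeConstraints t u j) :
      ((t + k : ℕ) : ℕ∞) = earliestArrive2 graph ∅ edgeConstraints t u tgt :=
    (earliestArrive2_eq_of_mem_reachableAt hk hmin).symm
  rintro a b (⟨rfl, rfl⟩ | ⟨rfl, rfl⟩)
  · exact ⟨0 + 1, 1 + 3, arrival (by decide) (by decide), arrival (by decide) (by decide), hopt⟩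
  · exact ⟨0 + 3, 3 + 1, arrival (by decide) (by decide), arrival (by decide) (by decide), hopt⟩
end

section
/- In an undirected graph with unit-time dynamics and a finite constraint set, within any safe interval [a,b] at vertex s, the function t ↦ C(t, s) mapping a start time t ∈ [a,b] to the minimum completion time over constraint-respecting paths from (t,s) visiting a fixed goal set Γ is monotone nondecreasing in t (taking value +∞ if no such path exists), and moreover C(t0, s) ≤ C(t1, s) whenever a ≤ t0 ≤ t1 ≤ b, with infeasibility at an earlier time implying infeasibility at a later time within the same safe interval... equivalently, C(t0,s) ≤ C(t1,s) for all t0 ≤ t1 in [a,b]. -/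
/-- Within a safe interval `[a, b]` at `s`, the minimum completion time
`C(t, s)` of a constraint-respecting multi-goal path is monotone
nondecreasing in the start time `t`. -/
theorem statement7 {V : Type*} (G : SimpleGraph V) (C : Set (ℕ × V)) (s : V)
    (a : ℕ) (b : ℕ∞)
    (hfree : ∀ t : ℕ, a ≤ t → (t : ℕ∞) ≤ b → (t, s) ∉ C)
    (hmaxlo : a = 0 ∨ (a - 1, s) ∈ C)
    (hmaxhi : ∀ t : ℕ, (t : ℕ∞) = b + 1 → (t, s) ∈ C)
    (Γ : Finset V) :
    MonotoneOn (fun t : ℕ => minCompletion G C t s ↑Γ)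
        {t : ℕ | a ≤ t ∧ (t : ℕ∞) ≤ b} ∧
      (∀ t0 t1 : ℕ, a ≤ t0 → t0 ≤ t1 → (t1 : ℕ∞) ≤ b →
        minCompletion G C t0 s ↑Γ ≤ minCompletion G C t1 s ↑Γ) := by
  have key : ∀ t0 t1 : ℕ, a ≤ t0 → t0 ≤ t1 → (t1 : ℕ∞) ≤ b →
      minCompletion G C t0 s ↑Γ ≤ minCompletion G C t1 s ↑Γ := by
    intro t0 t1 ha hle hb
    apply sInf_le_sInf
    rintro n ⟨p, hstart, hpos0, hresp, hvis, hcomp⟩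
    set d := t1 - t0 with hd
    refine ⟨⟨t0, d + p.len, fun i => p.pos (i - d), ?_⟩, rfl, ?_, ?_, ?_, ?_⟩
    · intro i hi
      rcases lt_or_ge i d with h | h
      · left; simp [Nat.sub_eq_zero_of_le h.le, Nat.sub_eq_zero_of_le h]
      · show p.pos (i + 1 - d) = p.pos (i - d) ∨ G.Adj (p.pos (i - d)) (p.pos (i + 1 - d))
        have h1 : i + 1 - d = (i - d) + 1 := by omega
        rw [h1]
        exact p.step (i - d) (by omega)
    · simp [hpos0]
    · intro i hi
      simp only [TPath.Respects] at hresp ⊢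
      rcases le_or_gt i d with h | h
      · show (t0 + i, p.pos (i - d)) ∉ C
        rw [Nat.sub_eq_zero_of_le h, hpos0]
        apply hfree
        · omega
        · calc ((t0 + i : ℕ) : ℕ∞) ≤ (t1 : ℕ∞) := by
                exact_mod_cast (by omega : t0 + i ≤ t1)
            _ ≤ b := hb
      · show (t0 + i, p.pos (i - d)) ∉ C
        have heq : t0 + i = p.start + (i - d) := by omega
        rw [heq]
        exact hresp (i - d) (by simp at hi; omega)
    · intro g hg
      obtain ⟨j, hj, hjg⟩ := hvis g hg
      exact ⟨j + d, by simp; omega, by simpa using hjg⟩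
    · rw [← hcomp]
      simp only [TPath.completion, hstart]
      norm_cast
      omega
  exact ⟨fun t0 ht0 t1 ht1 h => key t0 t1 ht0.1 h ht1.2,
    fun t0 t1 h1 h2 h3 => key t0 t1 h1 h2 h3⟩
end

section
/- Exchange argument for optimal goal-safe-interval sequences: in the timed model on an undirected graph with finite constraints, any optimal (minimum completion time) constraint-respecting path π from (0, s) visiting each goal vertex in a finite set Γ at least once induces a sequence of goal safe intervals I_1, ..., I_n (the safe intervals containing the times at which π first covers each goal), and the path produced by, for this sequence, greedily taking shortest subpaths arriving as early as possible within each successive I_k, has completion time equal to that of π. Hence the minimum over all goal-safe-interval visiting sequences of the greedy concatenated path's completion time equals the true optimum. -/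
/-- A (goal) time interval at a vertex; `hi = ⊤` means unbounded above. -/
structure SInterval (V : Type*) where
  v : V
  lo : ℕ
  hi : ℕ∞

/-- `I` is a safe interval: maximal constraint-free time interval at `I.v`. -/
def SInterval.IsSafe {V : Type*} (I : SInterval V) (C : Set (ℕ × V)) : Prop :=
  (∀ t : ℕ, I.lo ≤ t → (t : ℕ∞) ≤ I.hi → (t, I.v) ∉ C) ∧
  (I.lo = 0 ∨ (I.lo - 1, I.v) ∈ C) ∧
  (∀ t : ℕ, (t : ℕ∞) = I.hi + 1 → (t, I.v) ∈ C)

/-- Earliest completion time of a constraint-respecting path from `(t, u)`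
ending at `I.v` at a time inside the interval `I`. -/
noncomputable def earliestReach {V : Type*} (G : SimpleGraph V) (C : Set (ℕ × V))
    (t : ℕ) (u : V) (I : SInterval V) : ℕ∞ :=
  sInf {n : ℕ∞ | ∃ p : TPath G, p.start = t ∧ p.pos 0 = u ∧ p.Respects C ∧
    p.pos p.len = I.v ∧ I.lo ≤ p.completion ∧ (p.completion : ℕ∞) ≤ I.hi ∧
    (p.completion : ℕ∞) = n}

/-- The path visits the safe intervals `I 0, …, I (n-1)` in this order. -/
def VisitsInOrder {V : Type*} {G : SimpleGraph V} (p : TPath G) {n : ℕ}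
    (I : Fin n → SInterval V) : Prop :=
  ∃ idx : Fin n → ℕ, Monotone idx ∧ ∀ k, idx k ≤ p.len ∧ p.pos (idx k) = (I k).v ∧
    (I k).lo ≤ p.start + idx k ∧ ((p.start + idx k : ℕ) : ℕ∞) ≤ (I k).hi

namespace TPath

variable {V : Type*} {G : SimpleGraph V}

/-- The last position of `p` and the first one of `q` are identified. -/
def append (p q : TPath G) (h : q.pos 0 = p.pos p.len) : TPath G where
  start := p.start
  len := p.len + q.len
  pos i := if i ≤ p.len then p.pos i else q.pos (i - p.len)
  step i hi := by
    rcases lt_trichotomy i p.len with hlt | rfl | hgt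
    · simpa [hlt.le, Nat.succ_le_of_lt hlt] using p.step i hlt
    · simpa [h] using q.step 0 (by omega)
    · have hsucc : i + 1 - p.len = i - p.len + 1 := by omega
      simpa [hgt.not_ge, show ¬ i + 1 ≤ p.len by omega, hsucc] using q.step (i - p.len) (by omega)

def wait (G : SimpleGraph V) (t : ℕ) (v : V) (d : ℕ) : TPath G :=
  ⟨t, d, fun _ => v, fun _ _ => Or.inl rfl⟩

def slice (p : TPath G) (a b : ℕ) (hb : b ≤ p.len) : TPath G where
  start := p.start + a
  len := b - a
  pos i := p.pos (a + i)
  step i hi := by simpa [← add_assoc] using p.step (a + i) (by omega)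

section append

variable {p q : TPath G} {h : q.pos 0 = p.pos p.len}

theorem append_pos_of_le {i : ℕ} (hi : i ≤ p.len) : (p.append q h).pos i = p.pos i :=
  if_pos hi

theorem append_pos_len : (p.append q h).pos (p.append q h).len = q.pos q.len := by
  rcases Nat.eq_zero_or_pos q.len with hq | hq
  · simp [append, hq, h]
  · simp [append, show ¬ p.len + q.len ≤ p.len by omega]

theorem completion_append (hpq : q.start = p.completion) :
    (p.append q h).completion = q.completion := by
  simp only [completion, append] at *
  omega

theorem Respects.append {C : Set (ℕ × V)} (hp : p.Respects C) (hq : q.Respects C)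
    (hpq : q.start = p.completion) : (p.append q h).Respects C := by
  intro i hi
  by_cases hip : i ≤ p.len
  · simpa [TPath.append, hip] using hp i hip
  · have htime : p.start + i = q.start + (i - p.len) := by simp only [completion] at hpq; omega
    simpa [TPath.append, hip, htime] using hq (i - p.len) (by simp only [TPath.append] at hi; omega)

theorem Visits.append {g : V} (hg : p.Visits g) : (p.append q h).Visits g := by
  obtain ⟨i, hi, rfl⟩ := hg
  exact ⟨i, by simp only [TPath.append]; omega, append_pos_of_le hi⟩

end append

theorem visits_pos_len (p : TPath G) : p.Visits (p.pos p.len) := ⟨p.len, le_rfl, rfl⟩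

theorem Respects.slice {C : Set (ℕ × V)} {p : TPath G} (hp : p.Respects C) {a b : ℕ}
    (hab : a ≤ b) (hb : b ≤ p.len) : (p.slice a b hb).Respects C := by
  intro i hi
  simpa [TPath.slice, add_assoc] using hp (a + i) (by simp only [TPath.slice] at hi; omega)

end TPath

theorem Fin.monotone_cons {α : Type*} [Preorder α] {n : ℕ} {a : α} {f : Fin n → α}
    (hf : Monotone f) (ha : ∀ k, a ≤ f k) : Monotone (Fin.cons a f : Fin (n + 1) → α) := by
  intro i j hij
  cases i using Fin.cases with
  | zero => exact Fin.cases le_rfl ha j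
  | succ i =>
    cases j using Fin.cases with
    | zero => exact absurd hij (Fin.succ_ne_zero i ∘ Fin.le_zero_iff.mp)
    | succ j => simpa using hf (Fin.succ_le_succ_iff.mp hij)

section earliestReach

variable {V : Type*} {G : SimpleGraph V} {C : Set (ℕ × V)} {t : ℕ} {u : V} {I : SInterval V}

theorem earliestReach_le (p : TPath G) (hs : p.start = t) (h0 : p.pos 0 = u)
    (hr : p.Respects C) (he : p.pos p.len = I.v) (hlo : I.lo ≤ p.completion)
    (hhi : (p.completion : ℕ∞) ≤ I.hi) : earliestReach G C t u I ≤ p.completion :=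
  sInf_le ⟨p, hs, h0, hr, he, hlo, hhi, rfl⟩

theorem lo_le_earliestReach : (I.lo : ℕ∞) ≤ earliestReach G C t u I :=
  le_sInf <| by
    rintro _ ⟨p, -, -, -, -, hlo, -, rfl⟩
    exact_mod_cast hlo

theorem exists_completion_eq_earliestReach (h : earliestReach G C t u I ≠ ⊤) :
    ∃ p : TPath G, p.start = t ∧ p.pos 0 = u ∧ p.Respects C ∧ p.pos p.len = I.v ∧
      (p.completion : ℕ∞) = earliestReach G C t u I := by
  have hmem : earliestReach G C t u I ∈ _ :=
    csInf_mem <| Set.nonempty_iff_ne_empty.mpr fun hempty =>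
      h (by rw [earliestReach, hempty, sInf_empty])
  obtain ⟨p, hs, h0, hr, he, -, -, hp⟩ := hmem
  exact ⟨p, hs, h0, hr, he, hp⟩

theorem earliestReach_le_of_wait (q : TPath G) (ht : t ≤ q.start)
    (hfree : ∀ x, t ≤ x → x ≤ q.start → (x, q.pos 0) ∉ C) (hr : q.Respects C)
    (he : q.pos q.len = I.v) (hlo : I.lo ≤ q.completion) (hhi : (q.completion : ℕ∞) ≤ I.hi) :
    earliestReach G C t (q.pos 0) I ≤ q.completion := by
  let w := TPath.wait G t (q.pos 0) (q.start - t)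
  have hwq : q.start = w.completion := by simp [w, TPath.wait, TPath.completion]; omega
  have hw : w.Respects C := fun i hi =>
    hfree (t + i) (by omega) (by simp [w, TPath.wait] at hi; omega)
  have hcomp := TPath.completion_append (h := rfl) hwq
  rw [← hcomp] at hlo hhi ⊢
  exact earliestReach_le _ rfl rfl (hw.append hr hwq) (TPath.append_pos_len.trans he) hlo hhi

end earliestReach

section safeInterval

variable {V : Type*} {C : Set (ℕ × V)} {t : ℕ} {v : V}

theorem exists_safe_lo (h : (t, v) ∉ C) :
    ∃ lo ≤ t, (∀ x, lo ≤ x → x ≤ t → (x, v) ∉ C) ∧ (lo = 0 ∨ (lo - 1, v) ∈ C) := by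
  classical
  have hex : ∃ lo, ∀ x, lo ≤ x → x ≤ t → (x, v) ∉ C :=
    ⟨t, fun x h₁ h₂ => le_antisymm h₂ h₁ ▸ h⟩
  refine ⟨Nat.find hex, Nat.find_min' hex fun x h₁ h₂ => le_antisymm h₂ h₁ ▸ h,
    Nat.find_spec hex, ?_⟩
  refine (Nat.eq_zero_or_pos _).imp id fun hpos => ?_
  have hmin := Nat.find_min hex (Nat.sub_one_lt_of_lt hpos)
  push Not at hmin
  obtain ⟨x, h₁, h₂, hx⟩ := hmin
  obtain rfl : x = Nat.find hex - 1 := by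
    by_contra hne
    exact Nat.find_spec hex x (by omega) h₂ hx
  exact hx

theorem exists_safe_hi (h : (t, v) ∉ C) :
    ∃ hi : ℕ∞, (t : ℕ∞) ≤ hi ∧ (∀ x : ℕ, t ≤ x → (x : ℕ∞) ≤ hi → (x, v) ∉ C) ∧
      ∀ x : ℕ, (x : ℕ∞) = hi + 1 → (x, v) ∈ C := by
  classical
  by_cases hC : ∃ x, t < x ∧ (x, v) ∈ C
  · refine ⟨(Nat.find hC - 1 : ℕ), ?_, fun x h₁ h₂ hx => ?_, fun x hx => ?_⟩
    · exact_mod_cast Nat.le_sub_one_of_lt (Nat.find_spec hC).1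
    · have hlt : x < Nat.find hC := by
        have := (Nat.find_spec hC).1
        norm_cast at h₂
        omega
      rcases h₁.eq_or_lt with rfl | h₁
      · exact h hx
      · exact Nat.find_min hC hlt ⟨h₁, hx⟩
    · have hx' : x = Nat.find hC - 1 + 1 := by exact_mod_cast hx
      rw [hx', Nat.sub_add_cancel (by have := (Nat.find_spec hC).1; omega)]
      exact (Nat.find_spec hC).2
  · push Not at hC
    refine ⟨⊤, le_top, fun x h₁ _ hx => ?_, fun x hx => by simp at hx⟩
    rcases h₁.eq_or_lt with rfl | h₁
    · exact h hx
    · exact hC x h₁ hx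

theorem SInterval.exists_isSafe (h : (t, v) ∉ C) :
    ∃ I : SInterval V, I.v = v ∧ I.IsSafe C ∧ I.lo ≤ t ∧ (t : ℕ∞) ≤ I.hi := by
  obtain ⟨lo, hlo, hfree_lo, hbdry_lo⟩ := exists_safe_lo h
  obtain ⟨hi, hhi, hfree_hi, hbdry_hi⟩ := exists_safe_hi h
  refine ⟨⟨v, lo, hi⟩, rfl, ⟨fun x h₁ h₂ => ?_, hbdry_lo, hbdry_hi⟩, hlo, hhi⟩
  rcases le_total x t with hx | hx
  · exact hfree_lo x h₁ hx
  · exact hfree_hi x hx h₂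

end safeInterval

namespace TPath

variable {V : Type*} {G : SimpleGraph V}

theorem exists_monotone_visits (p : TPath G) (Γ : Finset V) (h : ∀ g ∈ Γ, p.Visits g) :
    ∃ (n : ℕ) (idx : Fin n → ℕ), Monotone idx ∧ (∀ k, idx k ≤ p.len ∧ p.pos (idx k) ∈ Γ) ∧
      ∀ g ∈ Γ, ∃ k, p.pos (idx k) = g := by
  classical
  choose! f hf using h
  set T := Γ.image f
  refine ⟨T.card, T.orderEmbOfFin rfl, (T.orderEmbOfFin rfl).monotone, fun k => ?_, fun g hg => ?_⟩
  · obtain ⟨g, hg, hk⟩ := Finset.mem_image.mp (T.orderEmbOfFin_mem rfl k)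
    rw [← hk, (hf g hg).2]
    exact ⟨(hf g hg).1, hg⟩
  · have hfg : f g ∈ Set.range (T.orderEmbOfFin rfl) := by
      rw [Finset.range_orderEmbOfFin]
      exact Finset.mem_image_of_mem f hg
    obtain ⟨k, hk⟩ := hfg
    exact ⟨k, hk ▸ (hf g hg).2⟩

end TPath

section schedule

variable {V : Type*} {G : SimpleGraph V} {C : Set (ℕ × V)} {n : ℕ} {I : Fin n → SInterval V}
  {τ : Fin (n + 1) → ℕ} {vtx : Fin (n + 1) → V}

theorem exists_path_of_earliestReach_chain (h0 : (τ 0, vtx 0) ∉ C)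
    (hv : ∀ k, vtx k.succ = (I k).v)
    (hτ : ∀ k, (τ k.succ : ℕ∞) = earliestReach G C (τ k.castSucc) (vtx k.castSucc) (I k))
    (i : Fin (n + 1)) :
    ∃ P : TPath G, P.start = τ 0 ∧ P.pos 0 = vtx 0 ∧ P.Respects C ∧ P.pos P.len = vtx i ∧
      P.completion = τ i ∧ ∀ j ≤ i, P.Visits (vtx j) := by
  induction i using Fin.induction with
  | zero =>
    refine ⟨TPath.wait G (τ 0) (vtx 0) 0, rfl, rfl, fun i hi => ?_, rfl, rfl, fun j hj => ?_⟩
    · obtain rfl : i = 0 := Nat.le_zero.mp hi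
      exact h0
    · obtain rfl : j = 0 := Fin.le_zero_iff.mp hj
      exact TPath.visits_pos_len _
  | succ i ih =>
    obtain ⟨P, hPs, hP0, hPr, hPe, hPc, hPv⟩ := ih
    obtain ⟨q, hqs, hq0, hqr, hqe, hqc⟩ :=
      exists_completion_eq_earliestReach ((hτ i).symm ▸ ENat.natCast_ne_top _)
    have hPq : q.start = P.completion := hqs.trans hPc.symm
    set R := P.append q (hq0.trans hPe.symm)
    have hend : R.pos R.len = vtx i.succ := TPath.append_pos_len.trans (hqe.trans (hv i).symm)
    refine ⟨R, hPs, (TPath.append_pos_of_le (Nat.zero_le _)).trans hP0, hPr.append hqr hPq, hend,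
      ?_, fun j hj => ?_⟩
    · rw [TPath.completion_append hPq]
      exact_mod_cast hqc.trans (hτ i).symm
    · rcases hj.lt_or_eq with hj | rfl
      · exact (hPv j (Fin.le_castSucc_iff.mpr hj)).append
      · exact hend ▸ R.visits_pos_len

theorem minCompletion_le_of_earliestReach_chain {Γ : Set V} (h0 : (τ 0, vtx 0) ∉ C)
    (hv : ∀ k, vtx k.succ = (I k).v)
    (hτ : ∀ k, (τ k.succ : ℕ∞) = earliestReach G C (τ k.castSucc) (vtx k.castSucc) (I k))
    (hcover : ∀ g ∈ Γ, ∃ k, (I k).v = g) :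
    minCompletion G C (τ 0) (vtx 0) Γ ≤ τ (Fin.last n) := by
  obtain ⟨P, hPs, hP0, hPr, -, hPc, hPv⟩ := exists_path_of_earliestReach_chain h0 hv hτ (Fin.last n)
  refine sInf_le ⟨P, hPs, hP0, hPr, fun g hg => ?_, by rw [hPc]⟩
  obtain ⟨k, rfl⟩ := hcover g hg
  exact hv k ▸ hPv k.succ (Fin.le_last _)

end schedule

section greedy

variable {V : Type*} {G : SimpleGraph V} {C : Set (ℕ × V)} {n : ℕ}

/-- An unreachable interval (`earliestReach = ⊤`) is recorded as time `0` by `ENat.toNat`. -/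
noncomputable def greedyTimes (G : SimpleGraph V) (C : Set (ℕ × V)) (t₀ : ℕ)
    (vtx : Fin (n + 1) → V) (I : Fin n → SInterval V) : Fin (n + 1) → ℕ :=
  Fin.induction t₀ fun k τ => (earliestReach G C τ (vtx k.castSucc) (I k)).toNat

theorem greedyTimes_zero (t₀ : ℕ) (vtx : Fin (n + 1) → V) (I : Fin n → SInterval V) :
    greedyTimes G C t₀ vtx I 0 = t₀ :=
  Fin.induction_zero ..

theorem greedyTimes_succ (t₀ : ℕ) (vtx : Fin (n + 1) → V) (I : Fin n → SInterval V)
    (k : Fin n) : greedyTimes G C t₀ vtx I k.succ =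
      (earliestReach G C (greedyTimes G C t₀ vtx I k.castSucc) (vtx k.castSucc) (I k)).toNat :=
  Fin.induction_succ ..

/-- The within-interval monotonicity lemma: whoever is at `π.pos a` no later than `π` can wait
there and then follow `π`, so arrives in `I` no later than `π` does. -/
theorem earliestReach_le_of_follow {π : TPath G} (hresp : π.Respects C) {I : SInterval V}
    {a b τ : ℕ} (hab : a ≤ b) (hb : b ≤ π.len) (hτ : τ ≤ π.start + a)
    (hfree : ∀ x, τ ≤ x → x ≤ π.start + a → (x, π.pos a) ∉ C) (he : π.pos b = I.v)
    (hlo : I.lo ≤ π.start + b) (hhi : ((π.start + b : ℕ) : ℕ∞) ≤ I.hi) :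
    earliestReach G C τ (π.pos a) I ≤ (π.start + b : ℕ) := by
  have hcomp : (π.slice a b hb).completion = π.start + b := by
    simp only [TPath.completion, TPath.slice]
    omega
  rw [← hcomp] at hlo hhi ⊢
  exact earliestReach_le_of_wait (π.slice a b hb) hτ hfree (hresp.slice hab hb)
    (by simpa [TPath.slice, Nat.add_sub_cancel' hab] using he) hlo hhi

theorem greedyTimes_spec {π : TPath G} {I : Fin n → SInterval V} {vtx : Fin (n + 1) → V}
    (hresp : π.Respects C) (hsafe : ∀ k, (I k).IsSafe C) (hπ : VisitsInOrder π I)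
    (hv0 : vtx 0 = π.pos 0) (hv : ∀ k, vtx k.succ = (I k).v) :
    (∀ k, (greedyTimes G C π.start vtx I k.succ : ℕ∞) =
      earliestReach G C (greedyTimes G C π.start vtx I k.castSucc) (vtx k.castSucc) (I k)) ∧
    greedyTimes G C π.start vtx I (Fin.last n) ≤ π.completion := by
  obtain ⟨idx, hmono, hidx⟩ := hπ
  set τ := greedyTimes G C π.start vtx I
  set visit : Fin (n + 1) → ℕ := Fin.cons 0 idx
  have hvisit_len : ∀ i, visit i ≤ π.len := Fin.cases (Nat.zero_le _) fun k => (hidx k).1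
  have hvtx : ∀ i, vtx i = π.pos (visit i) := Fin.cases hv0 fun k => (hv k).trans (hidx k).2.1.symm
  have hstep : ∀ k : Fin n, τ k.castSucc ≤ π.start + visit k.castSucc →
      (∀ x, τ k.castSucc ≤ x → x ≤ π.start + visit k.castSucc → (x, π.pos (visit k.castSucc)) ∉ C) →
      earliestReach G C (τ k.castSucc) (vtx k.castSucc) (I k) ≤ (π.start + idx k : ℕ) :=
    fun k h₁ h₂ => hvtx k.castSucc ▸ earliestReach_le_of_follow hresp
      (Fin.monotone_cons hmono (fun _ => Nat.zero_le _) (Fin.castSucc_le_succ k)) (hidx k).1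
      h₁ h₂ (hidx k).2.1 (hidx k).2.2.1 (hidx k).2.2.2
  have hτ : ∀ k : Fin n,
      earliestReach G C (τ k.castSucc) (vtx k.castSucc) (I k) ≤ (π.start + idx k : ℕ) →
      (τ k.succ : ℕ∞) = earliestReach G C (τ k.castSucc) (vtx k.castSucc) (I k) :=
    fun k hk => by
      rw [show τ k.succ = _ from greedyTimes_succ _ _ _ k,
        ENat.natCast_toNat (ne_top_of_le_ne_top (ENat.natCast_ne_top _) hk)]
  have hinv : ∀ i, τ i ≤ π.start + visit i ∧
      ∀ x, τ i ≤ x → x ≤ π.start + visit i → (x, π.pos (visit i)) ∉ C := by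
    intro i
    induction i using Fin.induction with
    | zero =>
      refine ⟨(greedyTimes_zero ..).trans_le (Nat.le_add_right _ _), fun x h₁ h₂ => ?_⟩
      obtain rfl : x = π.start := by simp [τ, visit, greedyTimes_zero] at h₁ h₂; omega
      simpa [visit] using hresp 0 (Nat.zero_le _)
    | succ k ih =>
      have hle := hstep k ih.1 ih.2
      have hτk := hτ k hle
      have hlo : (I k).lo ≤ τ k.succ := by exact_mod_cast lo_le_earliestReach.trans hτk.symm.le
      have hup : τ k.succ ≤ π.start + idx k := by exact_mod_cast hτk.le.trans hle
      simp only [visit, Fin.cons_succ]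
      refine ⟨hup, fun x h₁ h₂ => (hidx k).2.1 ▸ (hsafe k).1 x (hlo.trans h₁) ?_⟩
      exact (Nat.cast_le.mpr h₂).trans (hidx k).2.2.2
  refine ⟨fun k => hτ k (hstep k (hinv _).1 (hinv _).2), (hinv _).1.trans ?_⟩
  exact Nat.add_le_add_left (hvisit_len _) _

end greedy

/-- Exchange argument for optimal goal-safe-interval sequences: any optimal
constraint-respecting path `π` from `(0, s)` visiting all goals of `Γ` induces
a sequence of goal safe intervals, visited in order by `π` and covering `Γ`,
such that the greedy (earliest-arrival) concatenation along this sequence has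
completion time equal to that of `π`; hence the minimum over all
goal-safe-interval visiting sequences of the greedy completion time equals the
true optimum. -/
theorem statement14 {V : Type*} (G : SimpleGraph V) (C : Set (ℕ × V)) (s : V)
    (Γ : Finset V) (π : TPath G)
    (hstart : π.start = 0) (hpos : π.pos 0 = s) (hresp : π.Respects C)
    (hvisit : ∀ g ∈ Γ, π.Visits g)
    (hopt : (π.completion : ℕ∞) = minCompletion G C 0 s ↑Γ) :
    (∃ (n : ℕ) (I : Fin n → SInterval V),
      (∀ k, (I k).IsSafe C ∧ (I k).v ∈ Γ) ∧
      (∀ g ∈ Γ, ∃ k, (I k).v = g) ∧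
      VisitsInOrder π I ∧
      ∃ (τ : Fin (n + 1) → ℕ) (vtx : Fin (n + 1) → V),
        τ 0 = 0 ∧ vtx 0 = s ∧ (∀ k : Fin n, vtx k.succ = (I k).v) ∧
        (∀ k : Fin n, (τ k.succ : ℕ∞) =
          earliestReach G C (τ k.castSucc) (vtx k.castSucc) (I k)) ∧
        (τ (Fin.last n) : ℕ∞) = (π.completion : ℕ∞)) ∧
    sInf {m : ℕ∞ | ∃ (n : ℕ) (I : Fin n → SInterval V)
        (τ : Fin (n + 1) → ℕ) (vtx : Fin (n + 1) → V),
        (∀ k, (I k).IsSafe C ∧ (I k).v ∈ Γ) ∧ (∀ g ∈ Γ, ∃ k, (I k).v = g) ∧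
        τ 0 = 0 ∧ vtx 0 = s ∧ (∀ k : Fin n, vtx k.succ = (I k).v) ∧
        (∀ k : Fin n, (τ k.succ : ℕ∞) =
          earliestReach G C (τ k.castSucc) (vtx k.castSucc) (I k)) ∧
        (τ (Fin.last n) : ℕ∞) = m} = minCompletion G C 0 s ↑Γ := by
  have h0 : (0, s) ∉ C := by simpa [hstart, hpos] using hresp 0 (Nat.zero_le _)
  obtain ⟨n, idx, hmono, hidx, hcover⟩ := π.exists_monotone_visits Γ hvisit
  choose I hIv hIsafe hIlo hIhi using fun k => SInterval.exists_isSafe (hresp (idx k) (hidx k).1)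
  have hπI : VisitsInOrder π I :=
    ⟨idx, hmono, fun k => ⟨(hidx k).1, (hIv k).symm, hIlo k, hIhi k⟩⟩
  have hIΓ : ∀ k, (I k).IsSafe C ∧ (I k).v ∈ Γ := fun k => ⟨hIsafe k, hIv k ▸ (hidx k).2⟩
  have hIcover : ∀ g ∈ Γ, ∃ k, (I k).v = g := fun g hg =>
    (hcover g hg).imp fun k hk => (hIv k).trans hk
  set vtx : Fin (n + 1) → V := Fin.cons s fun k => (I k).v
  have hv : ∀ k, vtx k.succ = (I k).v := fun k => Fin.cons_succ ..
  obtain ⟨hτ, hτπ⟩ := greedyTimes_spec hresp hIsafe hπI (hpos ▸ Fin.cons_zero ..) hv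
  have hτ0 : greedyTimes G C π.start vtx I 0 = 0 := (greedyTimes_zero ..).trans hstart
  generalize greedyTimes G C π.start vtx I = τ at hτ hτπ hτ0
  have hτlast : (τ (Fin.last n) : ℕ∞) = π.completion := by
    refine le_antisymm (by exact_mod_cast hτπ) (hopt.trans_le ?_)
    have := minCompletion_le_of_earliestReach_chain (Γ := ↑Γ) (by rwa [hτ0]) hv hτ hIcover
    rwa [hτ0] at this
  refine ⟨⟨n, I, hIΓ, hIcover, hπI, τ, vtx, hτ0, rfl, hv, hτ, hτlast⟩, le_antisymm ?_ ?_⟩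
  · exact hopt ▸ sInf_le ⟨n, I, τ, vtx, hIΓ, hIcover, hτ0, rfl, hv, hτ, hτlast⟩
  · refine le_sInf ?_
    rintro m ⟨n', I', τ', vtx', -, hcover', hτ0', hv0', hv', hτ', rfl⟩
    have := minCompletion_le_of_earliestReach_chain (Γ := ↑Γ) (by rwa [hτ0', hv0']) hv' hτ' hcover'
    rwa [hτ0', hv0'] at this
end
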